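/- Let k be an algebraically closed field of characteristic zero, and let X = (0,0,1; 0,0,0; −1,0,0) and Y = (0,0,0; 0,0,1; 0,−1,0) in M_3(k) (rows listed in order). For every P ∈ 𝒫_3, the matrices X and Y are each k-linear combinations of PᵀXP and PᵀYP; that is, there exist r, s, r′, s′ ∈ k with r·PᵀXP + s·PᵀYP = X and r′·PᵀXP + s′·PᵀYP = Y. -/

import Mathlib

/-!
Write `u ∧ v` for the alternating matrix `u vᵀ - v uᵀ`, so that `X = e₀ ∧ e₂`, `Y = e₁ ∧ e₂`
and `Pᵀ (u ∧ v) P = (uᵀP) ∧ (vᵀP)`. The last row of `P ∈ 𝒫₃` is `e₂`, hence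
`PᵀXP = P₀ ∧ e₂` and `PᵀYP = P₁ ∧ e₂` for the rows `P₀, P₁` of `P`. Expanding
`eᵢ = ∑ₗ (P⁻¹)ᵢₗ Pₗ` and using `e₂ ∧ e₂ = 0` gives
`eᵢ ∧ e₂ = (P⁻¹)ᵢ₀ PᵀXP + (P⁻¹)ᵢ₁ PᵀYP`.
-/

open Matrix

/-- Membership in `𝒫₃`: block form `(P₁ P₂; 0 1)` with `P₁ ∈ GL₂(k)`. -/
def memP3 {k : Type*} [Field k] (P : Matrix (Fin 3) (Fin 3) k) : Prop :=
  IsUnit !![P 0 0, P 0 1; P 1 0, P 1 1] ∧ P 2 0 = 0 ∧ P 2 1 = 0 ∧ P 2 2 = 1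

namespace Matrix

variable {n R : Type*} [CommRing R]

def wedge (u v : n → R) : Matrix n n R := vecMulVec u v - vecMulVec v u

@[simp]
theorem wedge_self (u : n → R) : wedge u u = 0 := sub_self _

theorem sum_smul_wedge {ι : Type*} (s : Finset ι) (c : ι → R) (v : ι → n → R) (u : n → R) :
    ∑ i ∈ s, c i • wedge (v i) u = wedge (∑ i ∈ s, c i • v i) u := by
  ext a b
  simp [wedge, vecMulVec_apply, Matrix.sum_apply, Finset.sum_apply, Finset.sum_mul, Finset.mul_sum, mul_sub,
    Finset.sum_sub_distrib, mul_assoc, mul_left_comm]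

variable [Fintype n]

theorem transpose_mul_wedge_mul (P : Matrix n n R) (u v : n → R) :
    Pᵀ * wedge u v * P = wedge (u ᵥ* P) (v ᵥ* P) := by
  simp only [wedge, Matrix.mul_sub, Matrix.sub_mul, mul_vecMulVec, vecMulVec_mul, mulVec_transpose]

theorem wedge_single_eq_sum_smul [DecidableEq n] (P : Matrix n n R) (hP : IsUnit P.det) {j : n}
    (hj : P j = Pi.single j 1) (w : n → R) :
    wedge w (Pi.single j 1) =
      ∑ l, (w ᵥ* P⁻¹) l • (Pᵀ * wedge (Pi.single l 1) (Pi.single j 1) * P) := by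
  simp only [transpose_mul_wedge_mul, single_one_vecMul, row, hj]
  rw [sum_smul_wedge _ _ P, ← vecMul_eq_sum, vecMul_vecMul, nonsing_inv_mul _ hP, vecMul_one]

end Matrix

theorem memP3.isUnit_det {k : Type*} [Field k] {P : Matrix (Fin 3) (Fin 3) k} (hP : memP3 P) :
    IsUnit P.det := by
  obtain ⟨hA, h20, h21, h22⟩ := hP
  rw [isUnit_iff_isUnit_det, det_fin_two_of] at hA
  rw [det_fin_three, h20, h21, h22]
  convert hA using 1
  ring

theorem memP3.row_two {k : Type*} [Field k] {P : Matrix (Fin 3) (Fin 3) k} (hP : memP3 P) :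
    P 2 = Pi.single 2 1 := by
  obtain ⟨-, h20, h21, h22⟩ := hP
  ext j
  fin_cases j <;> simp [h20, h21, h22]

theorem wedge_single_zero_two {R : Type*} [CommRing R] :
    wedge (Pi.single 0 1 : Fin 3 → R) (Pi.single 2 1) = !![0, 0, 1; 0, 0, 0; -1, 0, 0] := by
  ext i j
  fin_cases i <;> fin_cases j <;> simp [wedge, vecMulVec_apply]

theorem wedge_single_one_two {R : Type*} [CommRing R] :
    wedge (Pi.single 1 1 : Fin 3 → R) (Pi.single 2 1) = !![0, 0, 0; 0, 0, 1; 0, -1, 0] := by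
  ext i j
  fin_cases i <;> fin_cases j <;> simp [wedge, vecMulVec_apply]

theorem stmt_18_general (k : Type*) [Field k]
    (P : Matrix (Fin 3) (Fin 3) k) (hP : memP3 P) :
    (∃ r s : k, r • (Pᵀ * !![(0 : k), 0, 1; 0, 0, 0; -1, 0, 0] * P)
        + s • (Pᵀ * !![(0 : k), 0, 0; 0, 0, 1; 0, -1, 0] * P)
        = !![(0 : k), 0, 1; 0, 0, 0; -1, 0, 0]) ∧
    (∃ r' s' : k, r' • (Pᵀ * !![(0 : k), 0, 1; 0, 0, 0; -1, 0, 0] * P)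
        + s' • (Pᵀ * !![(0 : k), 0, 0; 0, 0, 1; 0, -1, 0] * P)
        = !![(0 : k), 0, 0; 0, 0, 1; 0, -1, 0]) := by
  have expand (i : Fin 3) : wedge (Pi.single i 1) (Pi.single 2 1) =
      P⁻¹ i 0 • (Pᵀ * !![(0 : k), 0, 1; 0, 0, 0; -1, 0, 0] * P)
        + P⁻¹ i 1 • (Pᵀ * !![(0 : k), 0, 0; 0, 0, 1; 0, -1, 0] * P) := by
    rw [wedge_single_eq_sum_smul P hP.isUnit_det hP.row_two, Fin.sum_univ_three, wedge_self,
      Matrix.mul_zero, Matrix.zero_mul, smul_zero, add_zero, wedge_single_zero_two,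
      wedge_single_one_two, single_one_vecMul]
    rfl
  exact ⟨⟨_, _, (expand 0).symm.trans wedge_single_zero_two⟩,
    ⟨_, _, (expand 1).symm.trans wedge_single_one_two⟩⟩

theorem stmt_18 (k : Type*) [Field k] [IsAlgClosed k] [CharZero k]
    (P : Matrix (Fin 3) (Fin 3) k) (hP : memP3 P) :
    (∃ r s : k, r • (Pᵀ * !![(0 : k), 0, 1; 0, 0, 0; -1, 0, 0] * P)
        + s • (Pᵀ * !![(0 : k), 0, 0; 0, 0, 1; 0, -1, 0] * P)
        = !![(0 : k), 0, 1; 0, 0, 0; -1, 0, 0]) ∧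
    (∃ r' s' : k, r' • (Pᵀ * !![(0 : k), 0, 1; 0, 0, 0; -1, 0, 0] * P)
        + s' • (Pᵀ * !![(0 : k), 0, 0; 0, 0, 1; 0, -1, 0] * P)
        = !![(0 : k), 0, 0; 0, 0, 1; 0, -1, 0]) :=
  stmt_18_general k P hP
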